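/- arXiv:1103.4135 — 3 statements merged into one kernel-verified Lean document; each statement's English description precedes it below -/
import Mathlib

section
/- Fix s ∈ (0,1/2), a ∈ ℝ, t ∈ ℝ, and a sequence Φ : ℤ → ℂ with Φ_0 = 0 and Σ_{k≠0} |Φ_k|/|k| < ∞; set S_k = Φ_k e^{−i(k³−ak)t}. Define, for a sequence v : ℤ → ℂ with v_0 = 0, K(v)_k = −Σ_{k₁+k₂=k, k₁,k₂≠0} e^{−3ikk₁k₂t} S_{k₁}v_{k₂}/(3k₁k₂) for k ≠ 0 and K(v)_0 = 0. Then there is a constant C, depending only on s and Σ_{k≠0}|Φ_k|/|k|, such that ‖K(v)‖_{H^{−s}} ≤ ‖K(v)‖_{ℓ²} ≤ C‖v‖_{H^{−s}} for every v with ‖v‖_{H^{−s}} < ∞. -/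
/-!
With `f j = |Φ_j| / |j|` and `g m = |v_m| |m|^{-s}`, the phases in `K` have modulus one and
`|m|⁻¹ ≤ |m|^{-s}` for `s ≤ 1`, so `|K(v)_k| ≤ (f ⋆ g)_k / 3`. Young's inequality
`‖f ⋆ g‖_{ℓ²} ≤ ‖f‖_{ℓ¹} ‖g‖_{ℓ²}`, obtained from the weighted Cauchy–Schwarz bound
`(f ⋆ g)_k² ≤ ‖f‖_{ℓ¹} (f ⋆ g²)_k` and summing over `k`, then gives
`‖K(v)‖_{ℓ²} ≤ (M / 3) ‖v‖_{H^{-s}}`. The other inequality is `|k|^{-2s} ≤ 1`.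
-/

noncomputable section

def l2norm (v : ℤ → ℂ) : ℝ := Real.sqrt (∑' k : ℤ, ‖v k‖ ^ 2)

def hnegNorm (s : ℝ) (v : ℤ → ℂ) : ℝ :=
  Real.sqrt (∑' k : ℤ, ‖v k‖ ^ 2 * |(k : ℝ)| ^ (-2 * s))

/-- `K(v)_k = -Σ_{k₁+k₂=k, k₁,k₂≠0} e^{-3ikk₁k₂t} S_{k₁} v_{k₂}/(3k₁k₂)`,
with `S_k = Φ_k e^{-i(k³-ak)t}`. -/
def Kop (a t : ℝ) (Φ : ℤ → ℂ) (v : ℤ → ℂ) (k : ℤ) : ℂ :=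
  if k = 0 then 0 else
    -∑' p : ℤ × ℤ,
      if p.1 + p.2 = k ∧ p.1 ≠ 0 ∧ p.2 ≠ 0 then
        Complex.exp (-3 * Complex.I * (k : ℂ) * (p.1 : ℂ) * (p.2 : ℂ) * (t : ℂ)) *
          (Φ p.1 * Complex.exp (-Complex.I * ((p.1 : ℂ) ^ 3 - (a : ℂ) * (p.1 : ℂ)) * (t : ℂ))) *
          v p.2 / (3 * (p.1 : ℂ) * (p.2 : ℂ))
      else 0

lemma tsum_sq_le_tsum_mul_tsum_of_sq_le_mul {ι : Type*} {r p q : ι → ℝ} (hp : ∀ i, 0 ≤ p i)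
    (hq : ∀ i, 0 ≤ q i) (hrpq : ∀ i, r i ^ 2 ≤ p i * q i) (hp_sum : Summable p)
    (hq_sum : Summable q) :
    Summable r ∧ (∑' i, r i) ^ 2 ≤ (∑' i, p i) * ∑' i, q i := by
  have hr_abs : ∀ i, |r i| ≤ (p i + q i) / 2 := fun i =>
    abs_le_of_sq_le_sq (by nlinarith [hrpq i, sq_nonneg (p i - q i)]) (by linarith [hp i, hq i])
  have hr_sum : Summable r := .of_norm_bounded ((hp_sum.add hq_sum).div_const 2) hr_abs
  refine ⟨hr_sum, le_of_tendsto_of_tendsto' (hr_sum.hasSum.pow 2)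
    (Filter.Tendsto.mul hp_sum.hasSum hq_sum.hasSum) fun u => ?_⟩
  exact Finset.sum_sq_le_sum_mul_sum_of_sq_le_mul u (fun i _ => hp i) (fun i _ => hq i)
    fun i _ => hrpq i

section Convolution

variable {G : Type*} [AddCommGroup G] {f g : G → ℝ}

lemma hasSum_tsum_mul_sub (hf : ∀ j, 0 ≤ f j) (hg : ∀ j, 0 ≤ g j) (hf_sum : Summable f)
    (hg_sum : Summable g) :
    (∀ k, Summable fun j => f j * g (k - j)) ∧
      HasSum (fun k => ∑' j, f j * g (k - j)) ((∑' j, f j) * ∑' j, g j) := by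
  let shear : G × G ≃ G × G :=
    (Equiv.prodComm G G).trans (Equiv.prodShear (Equiv.refl G) Equiv.subRight)
  have hprod : HasSum (fun x : G × G => f x.1 * g x.2) ((∑' j, f j) * ∑' j, g j) :=
    hf_sum.hasSum.mul hg_sum.hasSum (hf_sum.mul_of_nonneg hg_sum hf hg)
  have hshear : HasSum (fun x : G × G => f x.2 * g (x.1 - x.2)) ((∑' j, f j) * ∑' j, g j) :=
    shear.hasSum_iff.mpr hprod
  have hfiber : ∀ k, Summable fun j => f j * g (k - j) := hshear.summable.prod_factor
  exact ⟨hfiber, hshear.prod_fiberwise fun k => (hfiber k).hasSum⟩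

lemma sq_tsum_mul_sub_le (hf : ∀ j, 0 ≤ f j) (hf_sum : Summable f)
    (hg : Summable fun j => g j ^ 2) (k : G) :
    Summable (fun j => f j * g (k - j)) ∧
      (∑' j, f j * g (k - j)) ^ 2 ≤ (∑' j, f j) * ∑' j, f j * g (k - j) ^ 2 :=
  tsum_sq_le_tsum_mul_tsum_of_sq_le_mul hf (fun j => mul_nonneg (hf j) (sq_nonneg _))
    (fun j => (by ring : (f j * g (k - j)) ^ 2 = f j * (f j * g (k - j) ^ 2)).le) hf_sum
    ((hasSum_tsum_mul_sub hf (fun j => sq_nonneg (g j)) hf_sum hg).1 k)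

theorem tsum_sq_tsum_mul_sub_le (hf : ∀ j, 0 ≤ f j) (hf_sum : Summable f)
    (hg : Summable fun j => g j ^ 2) :
    Summable (fun k => (∑' j, f j * g (k - j)) ^ 2) ∧
      ∑' k, (∑' j, f j * g (k - j)) ^ 2 ≤ (∑' j, f j) ^ 2 * ∑' j, g j ^ 2 := by
  have hW := (hasSum_tsum_mul_sub hf (fun j => sq_nonneg (g j)) hf_sum hg).2
  have hle k := (sq_tsum_mul_sub_le hf hf_sum hg k).2
  have hsum := hW.summable.mul_left (∑' j, f j)
  have hsum_sq := hsum.of_nonneg_of_le (fun k => sq_nonneg _) hle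
  refine ⟨hsum_sq, ?_⟩
  calc _ ≤ ∑' k, (∑' j, f j) * ∑' j, f j * g (k - j) ^ 2 := hsum_sq.tsum_le_tsum hle hsum
    _ = _ := by rw [tsum_mul_left, hW.tsum_eq]; ring

end Convolution

lemma inv_abs_intCast_le_rpow_neg {s : ℝ} (hs : s ≤ 1) {m : ℤ} (hm : m ≠ 0) :
    |(m : ℝ)|⁻¹ ≤ |(m : ℝ)| ^ (-s) := by
  rw [← Real.rpow_neg_one]
  exact Real.rpow_le_rpow_of_exponent_le (by exact_mod_cast Int.one_le_abs hm) (by linarith)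

lemma abs_intCast_rpow_neg_le_one {s : ℝ} (hs : 0 ≤ s) (m : ℤ) : |(m : ℝ)| ^ (-s) ≤ 1 := by
  rcases eq_or_ne m 0 with rfl | hm
  · simpa using Real.zero_rpow_le_one (-s)
  · exact Real.rpow_le_one_of_one_le_of_nonpos (by exact_mod_cast Int.one_le_abs hm) (by linarith)

lemma mul_rpow_neg_sq (s x : ℝ) {y : ℝ} (hy : 0 ≤ y) :
    (x * y ^ (-s)) ^ 2 = x ^ 2 * y ^ (-2 * s) := by
  rw [mul_pow, ← Real.rpow_natCast (y ^ (-s)), ← Real.rpow_mul hy]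
  ring_nf

lemma hnegNorm_eq_sqrt_tsum_sq (s : ℝ) (v : ℤ → ℂ) :
    hnegNorm s v = √(∑' k : ℤ, (‖v k‖ * |(k : ℝ)| ^ (-s)) ^ 2) := by
  simp only [hnegNorm, mul_rpow_neg_sq s _ (abs_nonneg _)]

lemma hnegNorm_le_l2norm {s : ℝ} (hs : 0 ≤ s) {v : ℤ → ℂ} (hv : Summable fun k => ‖v k‖ ^ 2) :
    hnegNorm s v ≤ l2norm v := by
  have hle k : ‖v k‖ ^ 2 * |(k : ℝ)| ^ (-2 * s) ≤ ‖v k‖ ^ 2 :=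
    mul_le_of_le_one_right (sq_nonneg _) <| by
      simpa using abs_intCast_rpow_neg_le_one (by linarith) k
  exact Real.sqrt_le_sqrt <| (hv.of_nonneg_of_le (fun k => by positivity) hle).tsum_le_tsum hle hv

lemma norm_Kop_summand (a t : ℝ) (Φ v : ℤ → ℂ) (k : ℤ) {p₁ p₂ : ℤ} (h₁ : p₁ ≠ 0)
    (h₂ : p₂ ≠ 0) :
    ‖Complex.exp (-3 * Complex.I * (k : ℂ) * (p₁ : ℂ) * (p₂ : ℂ) * (t : ℂ)) *
        (Φ p₁ * Complex.exp (-Complex.I * ((p₁ : ℂ) ^ 3 - (a : ℂ) * (p₁ : ℂ)) * (t : ℂ))) *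
        v p₂ / (3 * (p₁ : ℂ) * (p₂ : ℂ))‖ =
      ‖Φ p₁‖ / |(p₁ : ℝ)| * (‖v p₂‖ * |(p₂ : ℝ)|⁻¹) / 3 := by
  have hphase₁ : -3 * Complex.I * (k : ℂ) * (p₁ : ℂ) * (p₂ : ℂ) * (t : ℂ) =
      ((-3 * k * p₁ * p₂ * t : ℝ) : ℂ) * Complex.I := by push_cast; ring
  have hphase₂ : -Complex.I * ((p₁ : ℂ) ^ 3 - (a : ℂ) * (p₁ : ℂ)) * (t : ℂ) =
      ((-((p₁ : ℝ) ^ 3 - a * p₁) * t : ℝ) : ℂ) * Complex.I := by push_cast; ring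
  rw [hphase₁, hphase₂]
  simp only [norm_div, norm_mul, Complex.norm_exp_ofReal_mul_I, Complex.norm_intCast]
  field_simp
  norm_num

lemma norm_Kop_le {s : ℝ} (hs : s ≤ 1) (a t : ℝ) (Φ v : ℤ → ℂ) (k : ℤ)
    (hsum : Summable fun j : ℤ =>
      ‖Φ j‖ / |(j : ℝ)| * (‖v (k - j)‖ * |((k - j : ℤ) : ℝ)| ^ (-s))) :
    ‖Kop a t Φ v k‖ ≤
      (∑' j : ℤ, ‖Φ j‖ / |(j : ℝ)| * (‖v (k - j)‖ * |((k - j : ℤ) : ℝ)| ^ (-s))) / 3 := by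
  set c := fun j : ℤ => ‖Φ j‖ / |(j : ℝ)| * (‖v (k - j)‖ * |((k - j : ℤ) : ℝ)| ^ (-s))
  have hc : ∀ j, 0 ≤ c j := fun j => by positivity
  rcases eq_or_ne k 0 with rfl | hk
  · rw [Kop, if_pos rfl, norm_zero]
    exact div_nonneg (tsum_nonneg hc) zero_le_three
  let bound (p : ℤ × ℤ) : ℝ :=
    if p.1 + p.2 = k then ‖Φ p.1‖ / |(p.1 : ℝ)| * (‖v p.2‖ * |(p.2 : ℝ)| ^ (-s)) / 3 else 0
  have hbound : HasSum bound ((∑' j, c j) / 3) := by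
    have hinj : Function.Injective fun j : ℤ => (j, k - j) := fun i j h => (Prod.ext_iff.mp h).1
    have hfiber : bound ∘ (fun j : ℤ => (j, k - j)) = fun j => c j / 3 := by
      ext j
      simp [bound, c]
    refine (hinj.hasSum_iff fun p hp => if_neg fun hpk => hp ⟨p.1, by ext <;> simp; omega⟩).mp ?_
    exact hfiber ▸ hsum.hasSum.div_const 3
  rw [Kop, if_neg hk, norm_neg]
  refine tsum_of_norm_bounded hbound fun ⟨p₁, p₂⟩ => ?_
  by_cases hp : p₁ + p₂ = k ∧ p₁ ≠ 0 ∧ p₂ ≠ 0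
  · obtain ⟨hpk, h₁, h₂⟩ := hp
    rw [if_pos ⟨hpk, h₁, h₂⟩, norm_Kop_summand a t Φ v k h₁ h₂]
    simp only [bound, if_pos hpk]
    gcongr
    exact inv_abs_intCast_le_rpow_neg hs h₂
  · rw [if_neg hp, norm_zero]
    simp only [bound]
    split_ifs <;> positivity

lemma l2norm_Kop_le {s : ℝ} (hs : s ≤ 1) (a t : ℝ) {Φ v : ℤ → ℂ}
    (hΦ : Summable fun k : ℤ => ‖Φ k‖ / |(k : ℝ)|)
    (hv : Summable fun k : ℤ => ‖v k‖ ^ 2 * |(k : ℝ)| ^ (-2 * s)) :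
    Summable (fun k => ‖Kop a t Φ v k‖ ^ 2) ∧
      l2norm (Kop a t Φ v) ≤ (∑' k : ℤ, ‖Φ k‖ / |(k : ℝ)|) / 3 * hnegNorm s v := by
  set f := fun k : ℤ => ‖Φ k‖ / |(k : ℝ)|
  set g := fun k : ℤ => ‖v k‖ * |(k : ℝ)| ^ (-s)
  have hf : ∀ k, 0 ≤ f k := fun k => by positivity
  have hg : Summable fun k => g k ^ 2 := by
    simpa only [g, mul_rpow_neg_sq s _ (abs_nonneg _)] using hv
  obtain ⟨hconv_sum, hconv_le⟩ := tsum_sq_tsum_mul_sub_le hf hΦ hg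
  have hK k : ‖Kop a t Φ v k‖ ^ 2 ≤ (∑' j, f j * g (k - j)) ^ 2 / 9 := by
    have hle := norm_Kop_le hs a t Φ v k (sq_tsum_mul_sub_le hf hΦ hg k).1
    calc ‖Kop a t Φ v k‖ ^ 2 ≤ ((∑' j, f j * g (k - j)) / 3) ^ 2 := by gcongr
      _ = _ := by ring
  have hK_sum : Summable fun k => ‖Kop a t Φ v k‖ ^ 2 :=
    (hconv_sum.div_const 9).of_nonneg_of_le (fun k => sq_nonneg _) hK
  refine ⟨hK_sum, ?_⟩
  calc l2norm (Kop a t Φ v) ≤ √(((∑' j, f j) ^ 2 * ∑' j, g j ^ 2) / 9) := by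
        refine Real.sqrt_le_sqrt ((hK_sum.tsum_le_tsum hK (hconv_sum.div_const 9)).trans ?_)
        rw [tsum_div_const]
        gcongr
    _ = _ := by
        rw [hnegNorm_eq_sqrt_tsum_sq]
        change _ = (∑' j, f j) / 3 * √(∑' j, g j ^ 2)
        rw [Real.sqrt_div' _ (by norm_num : (0:ℝ) ≤ 9), Real.sqrt_mul (sq_nonneg _),
          Real.sqrt_sq (tsum_nonneg hf), show (9 : ℝ) = 3 ^ 2 by norm_num,
          Real.sqrt_sq three_pos.le]
        ring

theorem K_apriori_estimate (s M : ℝ) (hs0 : 0 < s) (hs1 : s < 1 / 2) :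
    ∃ C : ℝ, ∀ (a t : ℝ) (Φ : ℤ → ℂ), Φ 0 = 0 →
      Summable (fun k : ℤ => ‖Φ k‖ / |(k : ℝ)|) →
      (∑' k : ℤ, ‖Φ k‖ / |(k : ℝ)|) ≤ M →
      ∀ v : ℤ → ℂ, v 0 = 0 →
        Summable (fun k : ℤ => ‖v k‖ ^ 2 * |(k : ℝ)| ^ (-2 * s)) →
        hnegNorm s (Kop a t Φ v) ≤ l2norm (Kop a t Φ v) ∧
        l2norm (Kop a t Φ v) ≤ C * hnegNorm s v := by
  refine ⟨M / 3, fun a t Φ _ hΦ hΦM v _ hv => ?_⟩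
  obtain ⟨hK_sum, hK_le⟩ := l2norm_Kop_le (by linarith) a t hΦ hv
  exact ⟨hnegNorm_le_l2norm hs0.le hK_sum,
    hK_le.trans (mul_le_mul_of_nonneg_right (by linarith) (Real.sqrt_nonneg _))⟩
end
end

section
/- Let a, b be real numbers with a ≥ b > 1. Then there exists a constant C, depending only on a and b, such that for all integers n₁ ≠ n₂: Σ_{m ∈ ℤ, m ≠ n₁, m ≠ n₂} |n₁ − m|^{−a} |n₂ − m|^{−b} ≤ C |n₁ − n₂|^{−b}. -/
/-!
Put `x = |n₁ - m|`, `y = |n₂ - m|` and `D = |n₁ - n₂| ≥ 1`. Since `D ≤ x + y`, one of `x`, `y`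
is at least `D / 2`, and the corresponding factor of `x ^ (-a) * y ^ (-b)` is at most
`2 ^ a * D ^ (-b)` (this is where `b ≤ a` and `D ≥ 1` enter). Keeping the other factor, every
term is at most `2 ^ a * D ^ (-b) * (x ^ (-a) + y ^ (-b))`, and the two resulting sums are
translates of the convergent sums `∑ |k| ^ (-a)` and `∑ |k| ^ (-b)`.
-/

open Real

lemma rpow_neg_le_two_rpow_mul_rpow_neg {x D a b c : ℝ} (hD : 1 ≤ D) (hx : D / 2 ≤ x)
    (hc : 0 ≤ c) (hbc : b ≤ c) (hca : c ≤ a) : x ^ (-c) ≤ 2 ^ a * D ^ (-b) := by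
  have hD0 : 0 < D := by linarith
  calc x ^ (-c) ≤ (D / 2) ^ (-c) := rpow_le_rpow_of_nonpos (by linarith) hx (by linarith)
    _ = 2 ^ c * D ^ (-c) := by
      rw [div_rpow hD0.le zero_le_two, rpow_neg zero_le_two, div_eq_mul_inv, inv_inv, mul_comm]
    _ ≤ 2 ^ a * D ^ (-b) := by
      gcongr
      norm_num

lemma rpow_neg_mul_rpow_neg_le {x y D a b : ℝ} (hb : 0 ≤ b) (hab : b ≤ a) (hD : 1 ≤ D)
    (hx : 0 ≤ x) (hy : 0 ≤ y) (hxy : D ≤ x + y) :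
    x ^ (-a) * y ^ (-b) ≤ 2 ^ a * D ^ (-b) * (x ^ (-a) + y ^ (-b)) := by
  have hx' : 0 ≤ x ^ (-a) := rpow_nonneg hx _
  have hy' : 0 ≤ y ^ (-b) := rpow_nonneg hy _
  rcases le_total (D / 2) x with hxD | hyD
  · have := rpow_neg_le_two_rpow_mul_rpow_neg hD hxD (hb.trans hab) hab le_rfl
    calc x ^ (-a) * y ^ (-b) ≤ 2 ^ a * D ^ (-b) * y ^ (-b) := by gcongr
      _ ≤ _ := by gcongr; linarith
  · have := rpow_neg_le_two_rpow_mul_rpow_neg hD (by linarith : D / 2 ≤ y) hb le_rfl hab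
    calc x ^ (-a) * y ^ (-b) ≤ x ^ (-a) * (2 ^ a * D ^ (-b)) := by gcongr
      _ ≤ _ := by nlinarith

lemma summable_abs_int_sub_rpow {a : ℝ} (ha : 1 < a) (n : ℤ) :
    Summable fun m : ℤ => |((n - m : ℤ) : ℝ)| ^ (-a) :=
  (Equiv.subLeft n).summable_iff.mpr (summable_abs_int_rpow ha)

lemma tsum_abs_int_sub_rpow (a : ℝ) (n : ℤ) :
    ∑' m : ℤ, |((n - m : ℤ) : ℝ)| ^ (-a) = ∑' k : ℤ, |(k : ℝ)| ^ (-a) :=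
  (Equiv.subLeft n).tsum_eq fun k : ℤ => |(k : ℝ)| ^ (-a)

lemma one_le_abs_intCast_sub {n₁ n₂ : ℤ} (hne : n₁ ≠ n₂) :
    (1 : ℝ) ≤ |((n₁ - n₂ : ℤ) : ℝ)| := by
  rw [← Int.cast_abs]
  exact_mod_cast Int.one_le_abs (sub_ne_zero.mpr hne)

theorem convolution_sum_estimate (a b : ℝ) (hb : 1 < b) (hab : b ≤ a) :
    ∃ C : ℝ, ∀ n₁ n₂ : ℤ, n₁ ≠ n₂ →
      (∑' m : ℤ, if m ≠ n₁ ∧ m ≠ n₂ then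
          |((n₁ - m : ℤ) : ℝ)| ^ (-a) * |((n₂ - m : ℤ) : ℝ)| ^ (-b)
        else 0) ≤ C * |((n₁ - n₂ : ℤ) : ℝ)| ^ (-b) := by
  have ha : 1 < a := hb.trans_le hab
  refine ⟨2 ^ a * ((∑' k : ℤ, |(k : ℝ)| ^ (-a)) + ∑' k : ℤ, |(k : ℝ)| ^ (-b)), ?_⟩
  intro n₁ n₂ hne
  set D := |((n₁ - n₂ : ℤ) : ℝ)|
  set G := fun m : ℤ => |((n₁ - m : ℤ) : ℝ)| ^ (-a)
  set H := fun m : ℤ => |((n₂ - m : ℤ) : ℝ)| ^ (-b)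
  have hbound : ∀ m, (if m ≠ n₁ ∧ m ≠ n₂ then G m * H m else 0) ≤
      2 ^ a * D ^ (-b) * (G m + H m) := by
    intro m
    have hD : D ≤ |((n₁ - m : ℤ) : ℝ)| + |((n₂ - m : ℤ) : ℝ)| := by
      have := abs_sub ((n₁ - m : ℤ) : ℝ) ((n₂ - m : ℤ) : ℝ)
      rwa [← Int.cast_sub, sub_sub_sub_cancel_right] at this
    have hGH := rpow_neg_mul_rpow_neg_le (by linarith) hab (one_le_abs_intCast_sub hne)
      (abs_nonneg _) (abs_nonneg _) hD
    split_ifs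
    · exact hGH
    · exact (mul_nonneg (rpow_nonneg (abs_nonneg _) _) (rpow_nonneg (abs_nonneg _) _)).trans hGH
  have hsum : Summable fun m => 2 ^ a * D ^ (-b) * (G m + H m) :=
    ((summable_abs_int_sub_rpow ha n₁).add (summable_abs_int_sub_rpow hb n₂)).mul_left _
  calc _ ≤ ∑' m, 2 ^ a * D ^ (-b) * (G m + H m) :=
        (hsum.of_nonneg_of_le (fun m => by positivity) hbound).tsum_le_tsum hbound hsum
    _ = _ := by
      rw [tsum_mul_left,
        (summable_abs_int_sub_rpow ha n₁).tsum_add (summable_abs_int_sub_rpow hb n₂),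
        tsum_abs_int_sub_rpow, tsum_abs_int_sub_rpow]
      ring
end

section
/- There exists a₀ > 0 such that for every a ≥ a₀ there is a nonconstant, 2π-periodic, twice continuously differentiable function f : ℝ → ℝ satisfying f''(x) + f(x)²/2 = a for all x ∈ ℝ. (Consequently q(x,t) = f(x) is a stationary 2π-periodic traveling-wave (cnoidal) solution of the KdV equation q_t + q_xxx + q q_x = 0.) -/
/-!
For `f = (A - m) / 3 + m sin² θ(x)` with `θ' = √((A + m sin² θ) / 12)` (so `θ` is a Jacobi
amplitude and `f` a shifted `cn²`), a direct computation gives `f'' + f² / 2 = (A² + A m + m²) / 18`.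
As `sin²` has period `π`, `f` is periodic with period `∫₀^π dθ / θ'`, the time `θ` needs to advance
by `π`. Along the ellipse `A² + A m + m² = 18 a` this period equals `π √(12 / A) < 2π` at `m = 0`
once `a > 1 / 2`, and it diverges logarithmically as `A → 0`. The intermediate value theorem yields
a point of the ellipse with period exactly `2π`, and there `m > 0`, so `f` is not constant.
-/

open Real Filter Set Function intervalIntegral Topology

theorem Function.Periodic.exists_surjective_hasDerivAt_inv_comp {F : ℝ → ℝ} {T : ℝ}
    (hper : Periodic F T) (hT : 0 < T) (hF : Continuous F) (hpos : ∀ y, 0 < F y) :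
    ∃ φ : ℝ → ℝ, Surjective φ ∧ (∀ x, HasDerivAt φ (F (φ x))⁻¹ x) ∧
      ∀ x, φ (x + ∫ y in 0..T, F y) = φ x + T := by
  set G : ℝ → ℝ := fun x ↦ ∫ y in 0..x, F y
  have hG : ∀ x, HasDerivAt G (F x) x := fun x ↦ (hF.integral_hasStrictDerivAt 0 x).hasDerivAt
  have hGsurj : Surjective G :=
    (continuous_primitive hF.intervalIntegrable 0).surjective
      (hper.tendsto_atTop_intervalIntegral_of_pos' (hF.intervalIntegrable 0 T) hpos hT)
      (hper.tendsto_atBot_intervalIntegral_of_pos' (hF.intervalIntegrable 0 T) hpos hT)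
  set E := (strictMono_of_hasDerivAt_pos hG hpos).orderIsoOfSurjective G hGsurj
  have hGshift : ∀ y, G (y + T) = G y + ∫ y in 0..T, F y := fun y ↦ by
    simpa only [zero_add] using hper.intervalIntegral_add_eq_add 0 y hF.intervalIntegrable
  refine ⟨E.symm, E.symm.surjective, fun x ↦ ?_, fun x ↦ E.injective ?_⟩
  · exact (hG _).of_local_left_inverse E.symm.continuous.continuousAt (hpos _).ne'
      (Eventually.of_forall E.apply_symm_apply)
  · change E (E.symm _) = G (E.symm x + T)
    rw [hGshift, E.apply_symm_apply]
    exact congrArg (· + _) (E.apply_symm_apply x).symm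

section
variable {𝕜 E : Type*} [NontriviallyNormedField 𝕜] [NormedAddCommGroup E] [NormedSpace 𝕜 E]
  {f f' f'' : 𝕜 → E}

lemma iteratedDeriv_two_eq_of_hasDerivAt (hf : ∀ x, HasDerivAt f (f' x) x)
    (hf' : ∀ x, HasDerivAt f' (f'' x) x) : iteratedDeriv 2 f = f'' := by
  rw [iteratedDeriv_succ, iteratedDeriv_one, funext fun x ↦ (hf x).deriv,
    funext fun x ↦ (hf' x).deriv]

lemma contDiff_two_of_hasDerivAt (hf : ∀ x, HasDerivAt f (f' x) x)
    (hf' : ∀ x, HasDerivAt f' (f'' x) x) (hf'' : Continuous f'') : ContDiff 𝕜 2 f := by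
  rw [show (2 : WithTop ℕ∞) = 1 + 1 from rfl, contDiff_succ_iff_deriv,
    funext fun x ↦ (hf x).deriv, contDiff_one_iff_deriv, funext fun x ↦ (hf' x).deriv]
  exact ⟨fun x ↦ (hf x).differentiableAt, by simp, fun x ↦ (hf' x).differentiableAt, hf''⟩

end

noncomputable def cnoidalSpeed (A m θ : ℝ) : ℝ := √((A + m * sin θ ^ 2) / 12)

noncomputable def cnoidalProfile (A m θ : ℝ) : ℝ := (A - m) / 3 + m * sin θ ^ 2

noncomputable def cnoidalSlope (A m θ : ℝ) : ℝ := 2 * m * sin θ * cos θ * cnoidalSpeed A m θ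

noncomputable def cnoidalPeriod (A m : ℝ) : ℝ := ∫ θ in 0..π, (cnoidalSpeed A m θ)⁻¹

section
variable {A m : ℝ}

lemma cnoidalSpeed_pos (hA : 0 < A) (hm : 0 ≤ m) (θ : ℝ) : 0 < cnoidalSpeed A m θ :=
  sqrt_pos.2 (by positivity)

lemma sq_cnoidalSpeed (hA : 0 < A) (hm : 0 ≤ m) (θ : ℝ) :
    cnoidalSpeed A m θ ^ 2 = (A + m * sin θ ^ 2) / 12 :=
  sq_sqrt (by positivity)

lemma cnoidalSpeed_add_pi (θ : ℝ) : cnoidalSpeed A m (θ + π) = cnoidalSpeed A m θ := by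
  simp only [cnoidalSpeed, sin_add_pi, neg_sq]

lemma cnoidalProfile_add_pi (θ : ℝ) : cnoidalProfile A m (θ + π) = cnoidalProfile A m θ := by
  simp only [cnoidalProfile, sin_add_pi, neg_sq]

lemma continuous_inv_cnoidalSpeed (hA : 0 < A) (hm : 0 ≤ m) :
    Continuous fun θ ↦ (cnoidalSpeed A m θ)⁻¹ :=
  Continuous.inv₀ (by unfold cnoidalSpeed; fun_prop) fun θ ↦ (cnoidalSpeed_pos hA hm θ).ne'

lemma continuousOn_cnoidalPeriod :
    ContinuousOn (uncurry cnoidalPeriod) {p | 0 < p.1 ∧ 0 ≤ p.2} := by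
  rw [continuousOn_iff_continuous_domRestrict]
  refine continuous_parametric_intervalIntegral_of_continuous' (Continuous.inv₀ ?_ ?_) 0 π
  · unfold cnoidalSpeed
    fun_prop
  · rintro ⟨⟨⟨A, m⟩, hA, hm⟩, θ⟩
    exact (cnoidalSpeed_pos hA hm θ).ne'

lemma cnoidalPeriod_zero_lt_two_pi (hA : 3 < A) : cnoidalPeriod A 0 < 2 * π := by
  have h : (√(A / 12))⁻¹ < 2 := by
    rw [inv_lt_comm₀ (sqrt_pos.2 (by linarith)) two_pos, lt_sqrt (by norm_num)]
    linarith
  simp only [cnoidalPeriod, cnoidalSpeed, zero_mul, add_zero, integral_const, sub_zero,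
    smul_eq_mul]
  nlinarith [pi_pos]

lemma eventually_two_pi_lt_cnoidalPeriod {M : ℝ} (hM : 0 ≤ M) :
    ∀ᶠ A in 𝓝[>] 0, ∀ m ∈ Icc 0 M, 2 * π < cnoidalPeriod A m := by
  set c := (√((1 + M) / 12))⁻¹
  set u := exp (-(2 * π / c))
  have hc : 0 < c := inv_pos.2 (sqrt_pos.2 (by positivity))
  have hu : 0 < u := exp_pos _
  have huπ : u ≤ π / 2 := by
    have : u < 1 := exp_lt_one_iff.2 (neg_lt_zero.2 (by positivity))
    linarith [pi_gt_three]
  filter_upwards [Ioc_mem_nhdsGT (by positivity : (0 : ℝ) < u ^ 2)] with A ⟨hA, hAu⟩ m ⟨hm, hmM⟩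
  have hbound : ∀ θ ∈ Icc u (π / 2), c * θ⁻¹ ≤ (cnoidalSpeed A m θ)⁻¹ := by
    rintro θ ⟨huθ, -⟩
    have hθ : 0 < θ := hu.trans_le huθ
    have hsq : A + m * sin θ ^ 2 ≤ (1 + M) * θ ^ 2 := by
      nlinarith [sin_sq_le_sq (x := θ), pow_le_pow_left₀ hu.le huθ 2]
    have hspeed : cnoidalSpeed A m θ ≤ θ / c :=
      calc cnoidalSpeed A m θ ≤ √(θ ^ 2 * ((1 + M) / 12)) := sqrt_le_sqrt (by linarith)
        _ = θ / c := by rw [sqrt_mul (sq_nonneg θ), sqrt_sq hθ.le, div_inv_eq_mul]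
    rw [← div_eq_mul_inv, ← inv_div]
    exact inv_anti₀ (cnoidalSpeed_pos hA hm θ) hspeed
  have hF := continuous_inv_cnoidalSpeed hA hm
  calc 2 * π < c * log (π / 2) + 2 * π := by
        have : 0 < log (π / 2) := log_pos (by linarith [pi_gt_three])
        nlinarith
    _ = c * log (π / 2 / u) := by
        rw [log_div (by positivity) hu.ne', log_exp]; field_simp; ring
    _ = ∫ θ in u..π / 2, c * θ⁻¹ := by
        rw [integral_const_mul, integral_inv_of_pos hu (by positivity)]
    _ ≤ ∫ θ in u..π / 2, (cnoidalSpeed A m θ)⁻¹ := by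
        have h0 : (0 : ℝ) ∉ uIcc u (π / 2) := by
          rw [uIcc_of_le huπ]; exact fun h ↦ hu.not_ge h.1
        exact integral_mono_on huπ ((intervalIntegrable_inv_iff.2 (Or.inr h0)).const_mul c)
          (hF.intervalIntegrable _ _) hbound
    _ ≤ cnoidalPeriod A m :=
        integral_mono_interval hu.le huπ (by linarith [pi_pos])
          (Eventually.of_forall fun θ ↦ inv_nonneg.2 (sqrt_nonneg _)) (hF.intervalIntegrable _ _)

variable {φ : ℝ → ℝ}

lemma hasDerivAt_cnoidalSpeed_comp (hA : 0 < A) (hm : 0 ≤ m)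
    (hφ : ∀ x, HasDerivAt φ (cnoidalSpeed A m (φ x)) x) (x : ℝ) :
    HasDerivAt (fun x ↦ cnoidalSpeed A m (φ x)) (m * sin (φ x) * cos (φ x) / 12) x := by
  refine ((((((hφ x).sin.fun_pow 2).const_mul m).const_add A).div_const 12).sqrt
    (by positivity)).congr_deriv ?_
  change _ / (2 * cnoidalSpeed A m (φ x)) = _
  field_simp [(cnoidalSpeed_pos hA hm (φ x)).ne']
  ring

lemma hasDerivAt_cnoidalProfile_comp (hφ : ∀ x, HasDerivAt φ (cnoidalSpeed A m (φ x)) x)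
    (x : ℝ) : HasDerivAt (fun x ↦ cnoidalProfile A m (φ x)) (cnoidalSlope A m (φ x)) x := by
  refine ((((hφ x).sin.fun_pow 2).const_mul m).const_add ((A - m) / 3)).congr_deriv ?_
  unfold cnoidalSlope
  push_cast
  ring

lemma hasDerivAt_cnoidalSlope_comp (hA : 0 < A) (hm : 0 ≤ m)
    (hφ : ∀ x, HasDerivAt φ (cnoidalSpeed A m (φ x)) x) (x : ℝ) :
    HasDerivAt (fun x ↦ cnoidalSlope A m (φ x))
      ((A ^ 2 + A * m + m ^ 2) / 18 - cnoidalProfile A m (φ x) ^ 2 / 2) x := by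
  refine ((((hφ x).sin.const_mul (2 * m)).fun_mul (hφ x).cos).fun_mul
    (hasDerivAt_cnoidalSpeed_comp hA hm hφ x)).congr_deriv ?_
  unfold cnoidalProfile
  linear_combination 2 * m * (cos (φ x) ^ 2 - sin (φ x) ^ 2) * sq_cnoidalSpeed hA hm (φ x)
    + (m * (A + m * sin (φ x) ^ 2) + m ^ 2 * sin (φ x) ^ 2) / 6 * sin_sq_add_cos_sq (φ x)

lemma exists_cnoidal_wave (hA : 0 < A) (hm : 0 < m) :
    ∃ f : ℝ → ℝ, ContDiff ℝ 2 f ∧ Periodic f (cnoidalPeriod A m) ∧ (∃ x y, f x ≠ f y) ∧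
      ∀ x, iteratedDeriv 2 f x + f x ^ 2 / 2 = (A ^ 2 + A * m + m ^ 2) / 18 := by
  obtain ⟨φ, hφsurj, hφ, hφshift⟩ := Periodic.exists_surjective_hasDerivAt_inv_comp
    (F := fun θ ↦ (cnoidalSpeed A m θ)⁻¹) (fun θ ↦ by simp only [cnoidalSpeed_add_pi]) pi_pos
    (continuous_inv_cnoidalSpeed hA hm.le) fun θ ↦ inv_pos.2 (cnoidalSpeed_pos hA hm.le θ)
  simp only [inv_inv] at hφ
  have hf := hasDerivAt_cnoidalProfile_comp hφ
  have hf' := hasDerivAt_cnoidalSlope_comp hA hm.le hφ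
  have hfc : Continuous fun x ↦ cnoidalProfile A m (φ x) :=
    continuous_iff_continuousAt.2 fun x ↦ (hf x).continuousAt
  refine ⟨_, contDiff_two_of_hasDerivAt hf hf' (by fun_prop), fun x ↦ ?_, ?_, fun x ↦ ?_⟩
  · simp only [cnoidalPeriod, hφshift, cnoidalProfile_add_pi]
  · obtain ⟨x, hx⟩ := hφsurj 0
    obtain ⟨y, hy⟩ := hφsurj (π / 2)
    refine ⟨x, y, ?_⟩
    simp only [cnoidalProfile, hx, hy, sin_zero, sin_pi_div_two]
    linarith
  · rw [iteratedDeriv_two_eq_of_hasDerivAt hf hf']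
    ring

end

lemma exists_cnoidalPeriod_eq_two_pi {a : ℝ} (ha : 1 / 2 < a) :
    ∃ A m, 0 < A ∧ 0 < m ∧ A ^ 2 + A * m + m ^ 2 = 18 * a ∧ cnoidalPeriod A m = 2 * π := by
  set R := √(18 * a)
  have hR : 3 < R := by rw [lt_sqrt (by norm_num)]; linarith
  have hRsq : R ^ 2 = 18 * a := sq_sqrt (by linarith)
  -- the root `m ≥ 0` of `A² + A m + m² = 18 a`
  set mOf : ℝ → ℝ := fun A ↦ (√(72 * a - 3 * A ^ 2) - A) / 2
  have hmOf : ∀ A ∈ Icc 0 R, A ^ 2 + A * mOf A + mOf A ^ 2 = 18 * a ∧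
      mOf A ∈ Icc 0 R ∧ (A < R → 0 < mOf A) := by
    rintro A ⟨hA, hAR⟩
    have hAsq : A ^ 2 ≤ R ^ 2 := pow_le_pow_left₀ hA hAR 2
    have hs := sq_sqrt (by linarith : 0 ≤ 72 * a - 3 * A ^ 2)
    have hs0 := sqrt_nonneg (72 * a - 3 * A ^ 2)
    have hell : A ^ 2 + A * mOf A + mOf A ^ 2 = 18 * a := by
      simp only [mOf]; linear_combination hs / 4
    have hm0 : 0 ≤ mOf A := by simp only [mOf]; nlinarith
    refine ⟨hell, ⟨hm0, by nlinarith⟩, fun hAR' ↦ ?_⟩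
    have : A ^ 2 < R ^ 2 := pow_lt_pow_left₀ hAR' hA two_ne_zero
    simp only [mOf]; nlinarith
  have hmR : mOf R = 0 := by
    obtain ⟨hell, ⟨hm0, -⟩, -⟩ := hmOf R ⟨by linarith, le_rfl⟩
    nlinarith
  obtain ⟨A₁, hA₁, hA₁R⟩ := ((eventually_two_pi_lt_cnoidalPeriod (by linarith : 0 ≤ R)).and
    (Ioo_mem_nhdsGT (by linarith : (0 : ℝ) < R))).exists
  have hcont : ContinuousOn (fun A ↦ cnoidalPeriod A (mOf A)) (Icc A₁ R) :=
    continuousOn_cnoidalPeriod.comp (f := fun A ↦ (A, mOf A)) (by fun_prop) fun A hA ↦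
      ⟨hA₁R.1.trans_le hA.1, (hmOf A ⟨hA₁R.1.le.trans hA.1, hA.2⟩).2.1.1⟩
  obtain ⟨A, hA, hPA⟩ := intermediate_value_Icc' hA₁R.2.le hcont
    ⟨by rw [hmR]; exact (cnoidalPeriod_zero_lt_two_pi hR).le,
      (hA₁ _ (hmOf A₁ ⟨hA₁R.1.le, hA₁R.2.le⟩).2.1).le⟩
  obtain ⟨hell, -, hpos⟩ := hmOf A ⟨hA₁R.1.le.trans hA.1, hA.2⟩
  have hAR : A < R := hA.2.lt_of_ne fun h ↦ (cnoidalPeriod_zero_lt_two_pi hR).ne <|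
    calc cnoidalPeriod R 0 = cnoidalPeriod A (mOf A) := by rw [h, hmR]
      _ = 2 * π := hPA
  exact ⟨A, mOf A, hA₁R.1.trans_le hA.1, hpos hAR, hell, hPA⟩

theorem exists_periodic_cnoidal_wave :
    ∃ a₀ : ℝ, 0 < a₀ ∧ ∀ a : ℝ, a₀ ≤ a →
      ∃ f : ℝ → ℝ, ContDiff ℝ 2 f ∧ (∀ x, f (x + 2 * Real.pi) = f x) ∧
        (∃ x y, f x ≠ f y) ∧ ∀ x, iteratedDeriv 2 f x + (f x) ^ 2 / 2 = a := by
  refine ⟨1, one_pos, fun a ha ↦ ?_⟩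
  obtain ⟨A, m, hA, hm, hell, hperiod⟩ := exists_cnoidalPeriod_eq_two_pi (by linarith : 1 / 2 < a)
  obtain ⟨f, hf, hper, hnonconst, hode⟩ := exists_cnoidal_wave hA hm
  refine ⟨f, hf, hperiod ▸ hper, hnonconst, fun x ↦ ?_⟩
  rw [hode, hell]
  ring
end
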